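/- Let α > 0 and let y₁, y₂ be convex Lipschitz functions on [0, α]; set h := y₁ − y₂ and ψ(x) := (x, h(x)) for x ∈ [0, α]. Then the left derivative ψ'₋(x) exists for every x ∈ (0, α], the map x ↦ ψ'₋(x) is left-continuous on (0, α], and ‖ψ'₋(x)‖ ≥ 1 for every x ∈ (0, α]; consequently the curve ψ has a left half-tangent at every point of (0, α], i.e., lim_{t→0+} (ψ(x) − ψ(x − t))/‖ψ(x) − ψ(x − t)‖ exists for every x ∈ (0, α]. -/

import Mathlib

open Set Filter Topology

noncomputable section

/-- The point `(a, b)` of `ℝ²`. -/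
def mk2 (a b : ℝ) : EuclideanSpace ℝ (Fin 2) :=
  (WithLp.equiv 2 (Fin 2 → ℝ)).symm ![a, b]

/-!
Left slopes `slope f z x` (`z < x`) of a convex function increase as `z ↑ x` and are bounded by the
Lipschitz constant, so the left derivative exists even at the endpoint `α`. It is left-continuous
because, for `w < z < x`, `slope f w z ≤ f'₋(z) ≤ slope f z x ≤ f'₋(x)`, and the lower bound tends
to `slope f w x`, which is close to `f'₋(x)` for `w` close to `x`. Hence `ψ'₋ = (1, y₁'₋ - y₂'₋)`
has norm at least `1`, and normalizing the left difference quotients of `ψ` yields the half-tangent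
`ψ'₋(x) / ‖ψ'₋(x)‖`.
-/

lemma mk2_eq_smul_add_smul (a b : ℝ) : mk2 a b = a • mk2 1 0 + b • mk2 0 1 := by
  ext i
  fin_cases i <;> simp [mk2]

lemma continuous_mk2_one : Continuous (mk2 1) := by
  rw [show mk2 1 = fun b => (1 : ℝ) • mk2 1 0 + b • mk2 0 1 from
    funext (mk2_eq_smul_add_smul 1)]
  fun_prop

lemma one_le_norm_mk2_one (b : ℝ) : 1 ≤ ‖mk2 1 b‖ := by
  simpa [mk2] using PiLp.norm_apply_le (mk2 1 b) 0

lemma HasDerivWithinAt.graph_mk2 {g : ℝ → ℝ} {g' x : ℝ} {s : Set ℝ}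
    (hg : HasDerivWithinAt g g' s x) :
    HasDerivWithinAt (fun t => mk2 t (g t)) (mk2 1 g') s x := by
  rw [funext fun t => mk2_eq_smul_add_smul t (g t), mk2_eq_smul_add_smul 1 g', one_smul]
  have h := ((hasDerivWithinAt_id x s).smul_const (mk2 1 0)).add (hg.smul_const (mk2 0 1))
  rw [one_smul] at h
  exact h

section

variable {E : Type*} [NormedAddCommGroup E] [NormedSpace ℝ E]

lemma HasDerivWithinAt.tendsto_inv_smul_sub_sub {f : ℝ → E} {f' : E} {x : ℝ}
    (hf : HasDerivWithinAt f f' (Iio x) x) :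
    Tendsto (fun t : ℝ => t⁻¹ • (f x - f (x - t))) (𝓝[>] 0) (𝓝 f') := by
  have hshift : Tendsto (fun t : ℝ => x - t) (𝓝[>] 0) (𝓝[<] x) := by
    have h := Filter.map_subLeft_nhdsGT (c := x) (a := (0 : ℝ))
    rw [sub_zero] at h
    exact h.le
  convert ((hasDerivWithinAt_iff_tendsto_slope' self_notMem_Iio).1 hf).comp hshift using 2 with t
  simp only [Function.comp_apply, slope_def_module, sub_sub_cancel_left, inv_neg, neg_smul,
    ← smul_neg, neg_sub]

lemma tendsto_inv_norm_smul_of_tendsto_inv_smul {g : ℝ → E} {v : E} (hv : v ≠ 0)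
    (hg : Tendsto (fun t : ℝ => t⁻¹ • g t) (𝓝[>] 0) (𝓝 v)) :
    Tendsto (fun t : ℝ => ‖g t‖⁻¹ • g t) (𝓝[>] 0) (𝓝 (‖v‖⁻¹ • v)) := by
  have hcont : ContinuousAt (fun w : E => ‖w‖⁻¹ • w) v :=
    (continuous_norm.continuousAt.inv₀ (norm_ne_zero_iff.2 hv)).smul continuousAt_id
  refine (hcont.tendsto.comp hg).congr' ?_
  filter_upwards [self_mem_nhdsWithin] with t (ht : 0 < t)
  rw [Function.comp_apply, norm_smul, Real.norm_of_nonneg (inv_nonneg.2 ht.le), smul_smul,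
    mul_inv, inv_inv, mul_comm t, mul_assoc, mul_inv_cancel₀ ht.ne', mul_one]

end

lemma LipschitzOnWith.abs_slope_le {f : ℝ → ℝ} {K : NNReal} {s : Set ℝ} {x y : ℝ}
    (hf : LipschitzOnWith K f s) (hx : x ∈ s) (hy : y ∈ s) : |slope f x y| ≤ K := by
  rw [slope_def_field, abs_div]
  exact div_le_of_le_mul₀ (abs_nonneg _) K.2
    (by simpa [Real.dist_eq] using hf.dist_le_mul y hy x hx)

namespace ConvexOn

variable {S : Set ℝ} {f : ℝ → ℝ} {a x : ℝ}

lemma hasDerivWithinAt_sSup_slope_Ioo (hfc : ConvexOn ℝ S f) (ha : a ∈ S) (hx : x ∈ S)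
    (hax : a < x) (hbdd : BddAbove (slope f x '' Ioo a x)) :
    HasDerivWithinAt f (sSup (slope f x '' Ioo a x)) (Iio x) x := by
  rw [hasDerivWithinAt_iff_tendsto_slope' self_notMem_Iio]
  refine MonotoneOn.tendsto_nhdsWithin_Ioo_left (nonempty_Ioo.2 hax) ?_ hbdd
  exact (hfc.monotoneOn_slope_lt hx).mono fun y hy =>
    ⟨hfc.1.ordConnected.out ha hx (Ioo_subset_Icc_self hy), hy.2⟩

lemma differentiableWithinAt_Iio_of_lipschitzOnWith {K : NNReal} (hfc : ConvexOn ℝ S f)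
    (hlip : LipschitzOnWith K f S) (ha : a ∈ S) (hx : x ∈ S) (hax : a < x) :
    DifferentiableWithinAt ℝ f (Iio x) x := by
  refine (hfc.hasDerivWithinAt_sSup_slope_Ioo ha hx hax ⟨K, ?_⟩).differentiableWithinAt
  rintro _ ⟨y, hy, rfl⟩
  exact (le_abs_self _).trans
    (hlip.abs_slope_le hx (hfc.1.ordConnected.out ha hx (Ioo_subset_Icc_self hy)))

lemma tendsto_leftDeriv_nhdsLT (hfc : ConvexOn ℝ S f) (ha : a ∈ S) (hx : x ∈ S) (hax : a < x)
    {f' : ℝ} (hf' : HasDerivWithinAt f f' (Iio x) x) :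
    Tendsto (fun z => derivWithin f (Iio z) z) (𝓝[<] x) (𝓝 f') := by
  have hIcc : Icc a x ⊆ S := hfc.1.ordConnected.out ha hx
  have hinterior : Ioo a x ⊆ interior S := interior_Icc (a := a) (b := x) ▸ interior_mono hIcc
  refine tendsto_order.2 ⟨fun l hl => ?_, fun m hm => ?_⟩
  · have hslope_x := (hasDerivWithinAt_iff_tendsto_slope' self_notMem_Iio).1 hf'
    obtain ⟨w, hlw, hw⟩ :=
      ((hslope_x.eventually (eventually_gt_nhds hl)).and (Ioo_mem_nhdsLT hax)).exists
    have hslope_w : Tendsto (slope f w) (𝓝[<] x) (𝓝 (slope f w x)) := by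
      rw [slope_fun_def_field]
      exact (hf'.continuousWithinAt.sub continuousWithinAt_const).div
        (continuousWithinAt_id.sub continuousWithinAt_const) (sub_ne_zero.2 hw.2.ne')
    rw [slope_comm] at hlw
    filter_upwards [hslope_w.eventually (eventually_gt_nhds hlw), Ioo_mem_nhdsLT hw.2] with z hlz hz
    exact hlz.trans_le <| hfc.slope_le_leftDeriv_of_mem_interior (hIcc (Ioo_subset_Icc_self hw))
      (hinterior ⟨hw.1.trans hz.1, hz.2⟩) hz.1
  · filter_upwards [Ioo_mem_nhdsLT hax] with z hz
    calc derivWithin f (Iio z) z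
        ≤ derivWithin f (Ioi z) z := hfc.leftDeriv_le_rightDeriv_of_mem_interior (hinterior hz)
      _ ≤ slope f z x := hfc.rightDeriv_le_slope_of_mem_interior (hinterior hz) hx hz.2
      _ ≤ f' := hfc.slope_le_of_hasDerivWithinAt_Iio (hIcc (Ioo_subset_Icc_self hz)) hx hz.2 hf'
      _ < m := hm

section Icc

variable {b : ℝ} {K : NNReal}

lemma hasDerivWithinAt_leftDeriv_Icc (hfc : ConvexOn ℝ (Icc a b) f)
    (hlip : LipschitzOnWith K f (Icc a b)) (hx : x ∈ Ioc a b) :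
    HasDerivWithinAt f (derivWithin f (Iio x) x) (Iio x) x :=
  (hfc.differentiableWithinAt_Iio_of_lipschitzOnWith hlip (left_mem_Icc.2 (hx.1.le.trans hx.2))
    (Ioc_subset_Icc_self hx) hx.1).hasDerivWithinAt

lemma continuousWithinAt_leftDeriv_Icc (hfc : ConvexOn ℝ (Icc a b) f)
    (hlip : LipschitzOnWith K f (Icc a b)) (hx : x ∈ Ioc a b) :
    ContinuousWithinAt (fun z => derivWithin f (Iio z) z) (Iic x) x :=
  continuousWithinAt_Iio_iff_Iic.1 <| hfc.tendsto_leftDeriv_nhdsLT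
    (left_mem_Icc.2 (hx.1.le.trans hx.2)) (Ioc_subset_Icc_self hx) hx.1
    (hfc.hasDerivWithinAt_leftDeriv_Icc hlip hx)

end Icc

end ConvexOn

theorem left_derivative_and_left_halftangent_of_DC_graph_general
    (α : ℝ) (y₁ y₂ : ℝ → ℝ)
    (hconv₁ : ConvexOn ℝ (Icc 0 α) y₁) (hconv₂ : ConvexOn ℝ (Icc 0 α) y₂)
    (hlip₁ : ∃ L₁ : NNReal, LipschitzOnWith L₁ y₁ (Icc 0 α))
    (hlip₂ : ∃ L₂ : NNReal, LipschitzOnWith L₂ y₂ (Icc 0 α))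
    (ψ : ℝ → EuclideanSpace ℝ (Fin 2))
    (hψ : ∀ x, ψ x = mk2 x (y₁ x - y₂ x)) :
    ∃ D : ℝ → EuclideanSpace ℝ (Fin 2),
      (∀ x ∈ Ioc (0 : ℝ) α,
        Tendsto (fun t : ℝ => t⁻¹ • (ψ x - ψ (x - t))) (𝓝[>] 0) (𝓝 (D x))) ∧
      (∀ x ∈ Ioc (0 : ℝ) α, ContinuousWithinAt D (Iic x) x) ∧
      (∀ x ∈ Ioc (0 : ℝ) α, 1 ≤ ‖D x‖) ∧
      ∀ x ∈ Ioc (0 : ℝ) α, ∃ v : EuclideanSpace ℝ (Fin 2),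
        Tendsto (fun t : ℝ => ‖ψ x - ψ (x - t)‖⁻¹ • (ψ x - ψ (x - t)))
          (𝓝[>] 0) (𝓝 v) := by
  obtain ⟨L₁, hL₁⟩ := hlip₁
  obtain ⟨L₂, hL₂⟩ := hlip₂
  let D : ℝ → EuclideanSpace ℝ (Fin 2) :=
    fun z => mk2 1 (derivWithin y₁ (Iio z) z - derivWithin y₂ (Iio z) z)
  have hD : ∀ x ∈ Ioc (0 : ℝ) α, HasDerivWithinAt ψ (D x) (Iio x) x := fun x hx => by
    rw [funext hψ]
    exact ((hconv₁.hasDerivWithinAt_leftDeriv_Icc hL₁ hx).sub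
      (hconv₂.hasDerivWithinAt_leftDeriv_Icc hL₂ hx)).graph_mk2
  refine ⟨D, fun x hx => (hD x hx).tendsto_inv_smul_sub_sub, fun x hx => ?_,
    fun x _ => one_le_norm_mk2_one _, fun x hx => ⟨‖D x‖⁻¹ • D x, ?_⟩⟩
  · exact continuous_mk2_one.continuousAt.comp_continuousWithinAt
      ((hconv₁.continuousWithinAt_leftDeriv_Icc hL₁ hx).sub
        (hconv₂.continuousWithinAt_leftDeriv_Icc hL₂ hx))
  · exact tendsto_inv_norm_smul_of_tendsto_inv_smul
      (norm_pos_iff.1 (zero_lt_one.trans_le (one_le_norm_mk2_one _)))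
      (hD x hx).tendsto_inv_smul_sub_sub

/-- For `h := y₁ - y₂` with `y₁, y₂` convex Lipschitz on `[0, α]` and
`ψ(x) := (x, h(x))`, the left derivative `ψ'₋` exists on `(0, α]`, is left-continuous
there, satisfies `‖ψ'₋(x)‖ ≥ 1`, and consequently `ψ` has a left half-tangent at every
point of `(0, α]`. -/
theorem left_derivative_and_left_halftangent_of_DC_graph
    (α : ℝ) (hα : 0 < α) (y₁ y₂ : ℝ → ℝ)
    (hconv₁ : ConvexOn ℝ (Icc 0 α) y₁) (hconv₂ : ConvexOn ℝ (Icc 0 α) y₂)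
    (hlip₁ : ∃ L₁ : NNReal, LipschitzOnWith L₁ y₁ (Icc 0 α))
    (hlip₂ : ∃ L₂ : NNReal, LipschitzOnWith L₂ y₂ (Icc 0 α))
    (ψ : ℝ → EuclideanSpace ℝ (Fin 2))
    (hψ : ∀ x, ψ x = mk2 x (y₁ x - y₂ x)) :
    ∃ D : ℝ → EuclideanSpace ℝ (Fin 2),
      (∀ x ∈ Ioc (0 : ℝ) α,
        Tendsto (fun t : ℝ => t⁻¹ • (ψ x - ψ (x - t))) (𝓝[>] 0) (𝓝 (D x))) ∧
      (∀ x ∈ Ioc (0 : ℝ) α, ContinuousWithinAt D (Iic x) x) ∧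
      (∀ x ∈ Ioc (0 : ℝ) α, 1 ≤ ‖D x‖) ∧
      ∀ x ∈ Ioc (0 : ℝ) α, ∃ v : EuclideanSpace ℝ (Fin 2),
        Tendsto (fun t : ℝ => ‖ψ x - ψ (x - t)‖⁻¹ • (ψ x - ψ (x - t)))
          (𝓝[>] 0) (𝓝 v) :=
  left_derivative_and_left_halftangent_of_DC_graph_general α y₁ y₂ hconv₁ hconv₂ hlip₁ hlip₂ ψ hψ
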